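/- Let k be a field, q ∈ k, and R = k⟨a,b⟩ the free algebra. Define elements fⁿ_s in R recursively by f⁰₀ = 1, fⁿ₀ = aⁿ, fⁿ_n = bⁿ, and fⁿ_s = f^{n−1}_{s−1} b + (−q)^s f^{n−1}_s a for 0 < s < n. Then for all n, t with 0 ≤ t ≤ n and all 0 ≤ s ≤ n, fⁿ_s = Σ_{j = max{0, s+t−n}}^{min{t,s}} (−q)^{j(n−s+j−t)} f^t_j f^{n−t}_{s−j} holds in R. -/
import Mathlib

noncomputable def fab (k : Type) [Field k] (q : k) : ℕ → ℕ → FreeAlgebra k (Fin 2)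
  | n, 0 => (FreeAlgebra.ι k 0) ^ n
  | 0, _ + 1 => 0
  | n + 1, s + 1 =>
      if s + 1 = n + 1 then (FreeAlgebra.ι k 1) ^ (n + 1)
      else if s + 1 < n + 1 then
        fab k q n s * FreeAlgebra.ι k 1 + ((-q) ^ (s + 1)) • (fab k q n (s + 1) * FreeAlgebra.ι k 0)
      else 0

lemma fab_zero (k : Type) [Field k] (q : k) (n : ℕ) :
    fab k q n 0 = (FreeAlgebra.ι k 0) ^ n := by
  cases n <;> rfl

lemma fab_self (k : Type) [Field k] (q : k) (n : ℕ) :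
    fab k q n n = (FreeAlgebra.ι k 1) ^ n := by
  cases n with
  | zero => simp [fab]
  | succ m => rw [fab]; simp

lemma fab_succ (k : Type) [Field k] (q : k) (n s : ℕ) (hs : s ≤ n + 1) :
    fab k q (n+1) s =
      (if 1 ≤ s then fab k q n (s-1) * FreeAlgebra.ι k 1 else 0)
      + (if s ≤ n then ((-q)^s) • (fab k q n s * FreeAlgebra.ι k 0) else 0) := by
  match s with
  | 0 => simp [fab_zero, pow_succ]
  | s+1 =>
    rw [fab]
    by_cases h : s + 1 = n + 1
    · rw [if_pos h]
      have hsn : s = n := by omega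
      subst hsn
      rw [if_pos (by omega), if_neg (by omega)]
      simp [fab_self, pow_succ]
    · have hlt : s + 1 < n + 1 := by omega
      rw [if_neg h, if_pos hlt, if_pos (by omega), if_pos (by omega)]
      simp

/-- For all n, t with 0 ≤ t ≤ n and all 0 ≤ s ≤ n,
fⁿ_s = Σ_{j = max{0, s+t−n}}^{min{t,s}} (−q)^{j(n−s+j−t)} f^t_j f^{n−t}_{s−j} in R = k⟨a,b⟩. -/
theorem stmt_2 (k : Type) [Field k] (q : k) :
    ∀ n t s : ℕ, t ≤ n → s ≤ n →
      fab k q n s =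
        ∑ j ∈ Finset.Icc (max 0 (s + t - n)) (min t s),
          ((-q) ^ (j * (n - s + j - t))) • (fab k q t j * fab k q (n - t) (s - j)) := by
  intro n t s ht hs
  revert s
  induction n, ht using Nat.le_induction with
  | base =>
    intro s hs
    have h1 : max 0 (s + t - t) = s := by omega
    have h2 : min t s = s := by omega
    rw [h1, h2, Finset.Icc_self, Finset.sum_singleton]
    have h3 : s * (t - s + s - t) = 0 := by
      have h : t - s + s = t := by omega
      rw [h]; simp
    have h4 : t - t = 0 := by omega
    rw [h3, h4, Nat.sub_self]
    simp [fab_zero]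
  | succ n htn ih =>
    intro s hs
    rcases Nat.eq_zero_or_pos s with hs0 | hs1
    · subst hs0
      have h1 : max 0 (0 + t - (n+1)) = 0 := by omega
      have h2 : min t 0 = 0 := by omega
      rw [h1, h2, Finset.Icc_self, Finset.sum_singleton]
      rw [fab_zero, fab_zero, fab_zero]
      simp [← pow_add]
      congr 1
      omega
    rcases Nat.lt_or_ge s (n+1) with hsn | hsn'
    swap
    · -- s = n + 1
      have hseq : s = n + 1 := by omega
      subst hseq
      have h1 : max 0 (n + 1 + t - (n+1)) = t := by omega
      have h2 : min t (n+1) = t := by omega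
      rw [h1, h2, Finset.Icc_self, Finset.sum_singleton]
      have h3 : n + 1 - (n+1) + t - t = 0 := by omega
      rw [h3, Nat.mul_zero, fab_self, fab_self, fab_self, ← pow_add]
      have h6 : t + (n + 1 - t) = n + 1 := by omega
      rw [h6]
      simp
    -- main case 1 ≤ s ≤ n
    have hsle : s ≤ n := by omega
    rw [fab_succ k q n s (by omega), if_pos (show 1 ≤ s by omega), if_pos hsle,
        ih (s-1) (by omega), ih s hsle]
    -- split RHS
    have hnt : n + 1 - t = (n - t) + 1 := by omega
    rw [hnt]
    have split : ∀ j ∈ Finset.Icc (max 0 (s + t - (n+1))) (min t s),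
        ((-q) ^ (j * (n + 1 - s + j - t))) • (fab k q t j * fab k q ((n-t)+1) (s-j))
        = (if 1 ≤ s - j then
            ((-q) ^ (j * (n - (s-1) + j - t))) • (fab k q t j * (fab k q (n-t) ((s-1)-j) * FreeAlgebra.ι k 1))
          else 0)
        + (if s - j ≤ n - t then
            ((-q) ^ (s + j * (n - s + j - t))) • (fab k q t j * (fab k q (n-t) (s-j) * FreeAlgebra.ι k 0))
          else 0) := by
      intro j hj
      simp only [Finset.mem_Icc] at hj
      rw [fab_succ k q (n-t) (s-j) (by omega)]
      rw [mul_add, smul_add]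
      congr 1
      · by_cases h1 : 1 ≤ s - j
        · rw [if_pos h1, if_pos h1]
          have e1 : s - j - 1 = (s-1) - j := by omega
          have e2 : j * (n + 1 - s + j - t) = j * (n - (s-1) + j - t) := by
            congr 1; omega
          rw [e1, e2]
        · rw [if_neg h1, if_neg h1, mul_zero, smul_zero]
      · by_cases h2 : s - j ≤ n - t
        · rw [if_pos h2, if_pos h2]
          rw [mul_smul_comm, smul_smul, ← pow_add]
          have e3 : j * (n + 1 - s + j - t) + (s - j) = s + j * (n - s + j - t) := by
            have hA : n + 1 - s + j - t = (n - s + j - t) + 1 := by omega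
            rw [hA, Nat.mul_succ]
            have hjs : j ≤ s := by omega
            generalize j * (n - s + j - t) = m
            omega
          rw [e3]
        · rw [if_neg h2, if_neg h2, mul_zero, smul_zero]
    rw [Finset.sum_congr rfl split, Finset.sum_add_distrib]
    congr 1
    · -- first sums
      rw [← Finset.sum_filter]
      have hset : (Finset.Icc (max 0 (s + t - (n+1))) (min t s)).filter (fun j => 1 ≤ s - j)
          = Finset.Icc (max 0 (s - 1 + t - n)) (min t (s-1)) := by
        ext j
        simp only [Finset.mem_filter, Finset.mem_Icc]
        omega
      rw [hset, Finset.sum_mul]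
      refine Finset.sum_congr rfl fun j hj => ?_
      rw [smul_mul_assoc, mul_assoc]
    · -- second sums
      rw [← Finset.sum_filter]
      have hset : (Finset.Icc (max 0 (s + t - (n+1))) (min t s)).filter (fun j => s - j ≤ n - t)
          = Finset.Icc (max 0 (s + t - n)) (min t s) := by
        ext j
        simp only [Finset.mem_filter, Finset.mem_Icc]
        omega
      rw [hset, Finset.sum_mul, Finset.smul_sum]
      refine Finset.sum_congr rfl fun j hj => ?_
      rw [smul_mul_assoc, smul_smul, ← pow_add, mul_assoc]
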